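/- Fix m ≥ 1 and for 1 ≤ l ≤ m let e_l ∈ MvPolynomial (Fin m) ℚ[t] be the deformed elementary symmetric polynomial e_l := ∑_{1 ≤ j₁ < ⋯ < j_l ≤ m} t^{(j₁−1)+⋯+(j_l−l)} X_{j₁}⋯X_{j_l}. Let U be the ℚ[t]-subalgebra of MvPolynomial (Fin m) ℚ[t] generated by e₁, …, e_m. Then the initial algebra of U — the ℚ-subalgebra of MvPolynomial (Fin m) ℚ generated by {in(f) : f ∈ U, f ≠ 0} — equals the ℚ-subalgebra generated by the m monomials X₁, X₁X₂, …, X₁X₂⋯X_m. In other words, {e₁,…,e_m} is a Khovanskii basis of U. -/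

import Mathlib

open Polynomial

/-- The t-adic valuation of the ℚ[t]-coefficient of minimal valuation of a
multivariate polynomial over ℚ[t]. -/
noncomputable def omega0 {σ : Type*} (f : MvPolynomial σ ℚ[X]) : ℕ :=
  sInf ((fun m => (f.coeff m).rootMultiplicity 0) '' ↑f.support)

/-- The initial form of `f`: the coefficient at each monomial is the coefficient of
`t ^ ω₀(f)` in the corresponding ℚ[t]-coefficient of `f`. -/
noncomputable def initForm {σ : Type*} (f : MvPolynomial σ ℚ[X]) : MvPolynomial σ ℚ :=
  ∑ m ∈ f.support, MvPolynomial.monomial m ((f.coeff m).coeff (omega0 f))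

/-- The deformed elementary symmetric polynomial
`e_l = ∑_{1 ≤ j₁ < ⋯ < j_l ≤ m} t^{(j₁-1)+⋯+(j_l-l)} X_{j₁}⋯X_{j_l}` of Sturmfels–Xu
(indices 0-indexed: for a subset `s` of size `l` the exponent is `∑_{j∈s} j - l(l-1)/2`). -/
noncomputable def eSym (m l : ℕ) : MvPolynomial (Fin m) ℚ[X] :=
  ∑ s ∈ Finset.powersetCard l (Finset.univ : Finset (Fin m)),
    MvPolynomial.C ((X : ℚ[X]) ^ ((∑ j ∈ s, (j : ℕ)) - l * (l - 1) / 2)) *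
      ∏ j ∈ s, MvPolynomial.X j

/-- The subalgebra of `MvPolynomial (Fin m) ℚ[t]` generated by the deformed elementary
symmetric polynomials `e₁, …, e_m`. -/
noncomputable def eSymAlgebra (m : ℕ) : Subalgebra ℚ[X] (MvPolynomial (Fin m) ℚ[X]) :=
  Algebra.adjoin ℚ[X] {h : MvPolynomial (Fin m) ℚ[X] | ∃ l, 1 ≤ l ∧ l ≤ m ∧ h = eSym m l}

/-!
Every nonzero `f` factors as `f = t ^ k * g` with `g` nonzero at `t = 0`, and then `in(f)` is the
reduction `ḡ` of `g` at `t = 0`. The reduction of `e_{l+1}` is `X₁ ⋯ X_{l+1}`: among the terms of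
`e_{l+1}` only the initial segment `{1, …, l+1}` carries no power of `t`. These monomials are
algebraically independent, their exponent vectors being unitriangular. Hence for `f = P(e)` with
`P = t ^ k * Q` and `Q̄ ≠ 0`, the reduction of `Q(e)` is `Q̄(X₁, X₁X₂, …) ≠ 0`, so
`in(f) = Q̄(X₁, X₁X₂, …)` lies in the algebra generated by the monomials `X₁ ⋯ X_l`.
-/

theorem Finset.sum_lt_sum_of_card_eq_of_initial {α : Type*} [DecidableEq α] {s t : Finset α}
    {f : α → ℕ} {c : ℕ} (hcard : s.card = t.card) (hne : s ≠ t) (ht : ∀ x ∈ t, f x < c)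
    (hs : ∀ y ∉ t, c ≤ f y) : ∑ x ∈ t, f x < ∑ x ∈ s, f x := by
  have hnonempty : (t \ s).Nonempty := by
    rw [Finset.sdiff_nonempty]
    exact fun hts => hne (Finset.eq_of_subset_of_card_le hts hcard.le).symm
  have hlow : ∑ x ∈ t \ s, f x < ∑ _x ∈ t \ s, c :=
    Finset.sum_lt_sum_of_nonempty hnonempty fun x hx => ht x (Finset.sdiff_subset hx)
  have hhigh : (s \ t).card • c ≤ ∑ x ∈ s \ t, f x :=
    Finset.card_nsmul_le_sum _ _ _ fun y hy => hs y (Finset.mem_sdiff.1 hy).2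
  rw [Finset.sum_const, ← Finset.card_sdiff_comm hcard] at hlow
  rw [← Finset.sum_inter_add_sum_sdiff t s, ← Finset.sum_inter_add_sum_sdiff s t,
    Finset.inter_comm]
  omega

theorem linearIndependent_sum_single_Iic {ι : Type*} [LinearOrder ι] [Fintype ι]
    [LocallyFiniteOrderBot ι] :
    LinearIndependent ℕ fun l : ι => ∑ i ∈ Finset.Iic l, Finsupp.single i 1 := by
  classical
  have hcoord (a : ι →₀ ℕ) (i : ι) :
      Finsupp.linearCombination ℕ (fun l : ι => ∑ j ∈ Finset.Iic l, Finsupp.single j 1) a i =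
        a i + ∑ l ∈ Finset.univ.filter (i < ·), a l := by
    rw [Finsupp.linearCombination_apply, Finsupp.sum_fintype _ _ (by simp),
      Finsupp.finsetSum_apply, Finset.sum_filter, ← Fintype.sum_ite_eq i a,
      ← Finset.sum_add_distrib]
    refine Finset.sum_congr rfl fun l _ => ?_
    rcases lt_trichotomy i l with h | rfl | h
    · simp [Finsupp.single_apply, h, h.le, h.ne]
    · simp [Finsupp.single_apply]
    · simp [Finsupp.single_apply, h.not_ge, h.not_gt, h.ne']
  intro a b hab
  ext i
  induction i using WellFoundedGT.induction with
  | _ i ih =>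
    have hi := congr($hab i)
    have htail : ∑ l ∈ Finset.univ.filter (i < ·), a l = ∑ l ∈ Finset.univ.filter (i < ·), b l :=
      Finset.sum_congr rfl fun l hl => ih l (Finset.mem_filter.1 hl).2
    rw [hcoord, hcoord] at hi
    omega

theorem MvPolynomial.algebraicIndependent_monomial_one {R σ ι : Type*} [CommRing R]
    {v : ι → σ →₀ ℕ} (hv : LinearIndependent ℕ v) :
    AlgebraicIndependent R fun i => MvPolynomial.monomial (v i) (1 : R) := by
  have h : MvPolynomial.aeval (R := R) (fun i => MvPolynomial.monomial (v i) (1 : R)) =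
      AddMonoidAlgebra.mapDomainAlgHom R R (Finsupp.linearCombination ℕ v).toAddMonoidHom := by
    refine MvPolynomial.algHom_ext fun i => ?_
    rw [MvPolynomial.aeval_X]
    symm
    refine (AddMonoidAlgebra.mapDomain_single (R := R)).trans ?_
    simp only [LinearMap.toAddMonoidHom_coe, Finsupp.linearCombination_single, one_smul]
    rfl
  rw [AlgebraicIndependent, h]
  exact AddMonoidAlgebra.mapDomain_injective hv

theorem MvPolynomial.algebraicIndependent_prod_X_Iic {R ι : Type*} [CommRing R] [LinearOrder ι]
    [Fintype ι] [LocallyFiniteOrderBot ι] :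
    AlgebraicIndependent R fun l : ι =>
      ∏ i ∈ Finset.Iic l, (MvPolynomial.X i : MvPolynomial ι R) := by
  have hmonomial (l : ι) : ∏ i ∈ Finset.Iic l, (MvPolynomial.X i : MvPolynomial ι R) =
      MvPolynomial.monomial (∑ i ∈ Finset.Iic l, Finsupp.single i 1) 1 :=
    (MvPolynomial.monomial_sum_one _ _).symm
  simpa only [hmonomial] using
    MvPolynomial.algebraicIndependent_monomial_one linearIndependent_sum_single_Iic

noncomputable def evalZero (σ : Type*) : MvPolynomial σ ℚ[X] →+* MvPolynomial σ ℚ :=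
  MvPolynomial.map (Polynomial.evalRingHom 0)

section InitialForm

variable {σ : Type*}

theorem coeff_evalZero (g : MvPolynomial σ ℚ[X]) (d : σ →₀ ℕ) :
    (evalZero σ g).coeff d = (g.coeff d).coeff 0 := by
  simp [evalZero, MvPolynomial.coeff_map, coeff_zero_eq_eval_zero]

theorem evalZero_eq_zero_iff {g : MvPolynomial σ ℚ[X]} :
    evalZero σ g = 0 ↔ MvPolynomial.C X ∣ g := by
  simp [MvPolynomial.C_dvd_iff_dvd_coeff, X_dvd_iff, MvPolynomial.ext_iff, coeff_evalZero]

theorem exists_eq_C_X_pow_mul {g : MvPolynomial σ ℚ[X]} (hg : g ≠ 0) :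
    ∃ k q, g = MvPolynomial.C (X ^ k) * q ∧ evalZero σ q ≠ 0 := by
  have hX : ¬IsUnit (MvPolynomial.C X : MvPolynomial σ ℚ[X]) := fun h =>
    not_isUnit_zero (M₀ := MvPolynomial σ ℚ) (by simpa [evalZero] using h.map (evalZero σ))
  obtain ⟨q, hgq, hndvd⟩ :=
    (FiniteMultiplicity.of_not_isUnit hX hg).exists_eq_pow_mul_and_not_dvd
  exact ⟨_, q, by rwa [map_pow], mt evalZero_eq_zero_iff.1 hndvd⟩

theorem coeff_initForm (f : MvPolynomial σ ℚ[X]) (d : σ →₀ ℕ) :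
    (initForm f).coeff d = (f.coeff d).coeff (omega0 f) := by
  classical
  simp only [initForm, MvPolynomial.coeff_sum, MvPolynomial.coeff_monomial,
    Finset.sum_ite_eq', MvPolynomial.mem_support_iff]
  split_ifs with h
  · rfl
  · simp [not_not.1 h]

theorem omega0_C_X_pow_mul (k : ℕ) {g : MvPolynomial σ ℚ[X]} (hg : evalZero σ g ≠ 0) :
    omega0 (MvPolynomial.C (X ^ k) * g) = k := by
  have hval (d) (hd : g.coeff d ≠ 0) :
      ((MvPolynomial.C (X ^ k) * g).coeff d).rootMultiplicity 0 =
        k + (g.coeff d).natTrailingDegree := by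
    rw [MvPolynomial.coeff_C_mul, rootMultiplicity_eq_natTrailingDegree',
      natTrailingDegree_mul (pow_ne_zero _ X_ne_zero) hd, natTrailingDegree_X_pow]
  obtain ⟨d₀, hd₀⟩ : ∃ d, (g.coeff d).coeff 0 ≠ 0 := by
    by_contra! h
    exact hg (MvPolynomial.ext _ _ fun d => by rw [coeff_evalZero, h, MvPolynomial.coeff_zero])
  have hsupp : ∀ {d}, d ∈ (MvPolynomial.C (X ^ k) * g).support ↔ g.coeff d ≠ 0 := by
    intro d
    rw [MvPolynomial.mem_support_iff, MvPolynomial.coeff_C_mul]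
    simp [X_ne_zero]
  refine IsLeast.csInf_eq ⟨⟨d₀, hsupp.2 fun h => hd₀ (by simp [h]), ?_⟩, ?_⟩
  · dsimp only
    rw [hval d₀ fun h => hd₀ (by simp [h]), natTrailingDegree_eq_zero.2 (.inr hd₀), add_zero]
  · rintro _ ⟨d, hd, rfl⟩
    dsimp only
    rw [hval d (hsupp.1 hd)]
    exact Nat.le_add_right _ _

theorem initForm_C_X_pow_mul (k : ℕ) {g : MvPolynomial σ ℚ[X]} (hg : evalZero σ g ≠ 0) :
    initForm (MvPolynomial.C (X ^ k) * g) = evalZero σ g := by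
  ext d
  rw [coeff_initForm, omega0_C_X_pow_mul k hg, MvPolynomial.coeff_C_mul, coeff_X_pow_mul',
    if_pos le_rfl, Nat.sub_self, coeff_evalZero]

theorem initForm_eq_evalZero {g : MvPolynomial σ ℚ[X]} (hg : evalZero σ g ≠ 0) :
    initForm g = evalZero σ g := by
  simpa using initForm_C_X_pow_mul 0 hg

theorem evalZero_aeval {ι : Type*} (E : ι → MvPolynomial σ ℚ[X]) (P : MvPolynomial ι ℚ[X]) :
    evalZero σ (MvPolynomial.aeval E P) =
      MvPolynomial.aeval (fun i => evalZero σ (E i)) (evalZero ι P) := by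
  induction P using MvPolynomial.induction_on with
  | C r => simp [evalZero, MvPolynomial.algebraMap_eq]
  | add p q hp hq => simp only [map_add, hp, hq]
  | mul_X p i hp =>
    simp only [map_mul, hp, MvPolynomial.aeval_X]
    simp [evalZero]

theorem initForm_mem_adjoin_of_algebraicIndependent {ι : Type*} {E : ι → MvPolynomial σ ℚ[X]}
    (hE : AlgebraicIndependent ℚ fun i => evalZero σ (E i)) {f : MvPolynomial σ ℚ[X]}
    (hf : f ∈ Algebra.adjoin ℚ[X] (Set.range E)) (hf0 : f ≠ 0) :
    initForm f ∈ Algebra.adjoin ℚ (Set.range fun i => evalZero σ (E i)) := by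
  rw [Algebra.adjoin_range_eq_range_aeval] at hf ⊢
  obtain ⟨P, rfl⟩ := (AlgHom.mem_range _).1 hf
  obtain ⟨k, Q, rfl, hQ⟩ := exists_eq_C_X_pow_mul (ne_of_apply_ne _ hf0 : P ≠ 0)
  have hreduced : evalZero σ (MvPolynomial.aeval E Q) ≠ 0 := by
    rw [evalZero_aeval]
    exact fun h => hQ (hE (h.trans (map_zero _).symm))
  rw [map_mul, MvPolynomial.aeval_C, MvPolynomial.algebraMap_eq, initForm_C_X_pow_mul k hreduced,
    evalZero_aeval]
  exact ⟨_, rfl⟩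

end InitialForm

theorem Fin.sum_val_Iic {m : ℕ} (l : Fin m) :
    ∑ j ∈ Finset.Iic l, (j : ℕ) = (l + 1) * l / 2 := by
  have h := Finset.sum_range_id ((l : ℕ) + 1)
  rwa [Nat.add_sub_cancel, Nat.range_succ_eq_Iic, ← Fin.map_valEmbedding_Iic,
    Finset.sum_map] at h

theorem evalZero_eSym_succ {m : ℕ} (l : Fin m) :
    evalZero (Fin m) (eSym m (l + 1)) = ∏ i ∈ Finset.Iic l, MvPolynomial.X i := by
  rw [eSym, map_sum, Finset.sum_eq_single (Finset.Iic l)]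
  · simp [evalZero, Fin.sum_val_Iic]
  · intro s hs hne
    have hlt : (l + 1) * l / 2 < ∑ j ∈ s, (j : ℕ) := by
      rw [← Fin.sum_val_Iic]
      refine Finset.sum_lt_sum_of_card_eq_of_initial (c := l + 1) ?_ hne (fun x hx => ?_)
        fun y hy => ?_
      · rw [Finset.mem_powersetCard_univ.1 hs, Fin.card_Iic]
      · exact Nat.lt_succ_of_le (Finset.mem_Iic.1 hx : x ≤ l)
      · exact Nat.succ_le_of_lt (not_le.1 fun h : y ≤ l => hy (Finset.mem_Iic.2 h))
    simp [evalZero, Nat.sub_eq_zero_iff_le, hlt.not_ge]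
  · exact absurd (Finset.mem_powersetCard_univ.2 (Fin.card_Iic l))

theorem eSymAlgebra_eq_adjoin_range (m : ℕ) :
    eSymAlgebra m = Algebra.adjoin ℚ[X] (Set.range fun l : Fin m => eSym m (l + 1)) := by
  rw [eSymAlgebra]
  congr 1
  ext h
  constructor
  · rintro ⟨l, hl1, hlm, rfl⟩
    exact ⟨⟨l - 1, by omega⟩, by simp only [Nat.sub_add_cancel hl1]⟩
  · rintro ⟨l, rfl⟩
    exact ⟨l + 1, by omega, l.isLt, rfl⟩

theorem eSym_khovanskii_basis_general (m : ℕ) :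
    Algebra.adjoin ℚ {g : MvPolynomial (Fin m) ℚ |
        ∃ f ∈ eSymAlgebra m, f ≠ 0 ∧ g = initForm f} =
    Algebra.adjoin ℚ (Set.range fun l : Fin m =>
        ∏ i ∈ Finset.Iic l, (MvPolynomial.X i : MvPolynomial (Fin m) ℚ)) := by
  have hreduced : AlgebraicIndependent ℚ fun l : Fin m => evalZero (Fin m) (eSym m (l + 1)) := by
    simpa only [evalZero_eSym_succ] using MvPolynomial.algebraicIndependent_prod_X_Iic
  apply le_antisymm
  · refine Algebra.adjoin_le ?_
    rintro _ ⟨f, hf, hf0, rfl⟩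
    rw [eSymAlgebra_eq_adjoin_range] at hf
    simpa only [evalZero_eSym_succ, SetLike.mem_coe] using
      initForm_mem_adjoin_of_algebraicIndependent hreduced hf hf0
  · refine Algebra.adjoin_le ?_
    rintro _ ⟨l, rfl⟩
    have hl : evalZero (Fin m) (eSym m (l + 1)) ≠ 0 := hreduced.ne_zero l
    refine Algebra.subset_adjoin ⟨eSym m (l + 1), ?_, fun h => hl (by rw [h, map_zero]), ?_⟩
    · rw [eSymAlgebra_eq_adjoin_range]
      exact Algebra.subset_adjoin ⟨l, rfl⟩
    · rw [initForm_eq_evalZero hl, evalZero_eSym_succ]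

/-- `{e₁, …, e_m}` is a Khovanskii basis: the initial algebra of the algebra they generate
is generated by the monomials `X₁, X₁X₂, …, X₁⋯X_m`. -/
theorem eSym_khovanskii_basis (m : ℕ) (hm : 1 ≤ m) :
    Algebra.adjoin ℚ {g : MvPolynomial (Fin m) ℚ |
        ∃ f ∈ eSymAlgebra m, f ≠ 0 ∧ g = initForm f} =
    Algebra.adjoin ℚ (Set.range fun l : Fin m =>
        ∏ i ∈ Finset.Iic l, (MvPolynomial.X i : MvPolynomial (Fin m) ℚ)) :=
  eSym_khovanskii_basis_general m
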